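/- arXiv:0902.3956 — 4 statements merged into one kernel-verified Lean document; each statement's English description precedes it below -/
import Mathlib

section
/- Suppose a countable Borel equivalence relation R on X acts on an R-arboretum A over X admitting an orientation A^{1+} which, as an R-fibered space, is isomorphic to the canonical left R-fibered space; identify A^{1+} with R via this isomorphism and let d(x) = (x, x) be the diagonal section. Assume that the R_{A⁰}-saturations of o(d(X)) and of t(d(X)) form a Borel partition of the vertex space A⁰. Then R is the free product of the stabilizers of the two vertex sections: R = Stab_R(o∘d) ⋆ Stab_R(t∘d). -/
open Set

universe u

section Relations

variable {X : Type u} [MeasurableSpace X]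

/-- A countable Borel equivalence relation on `X` : a Borel subset of `X × X` which is an
equivalence relation all of whose classes are countable. -/
def IsCBER (R : Set (X × X)) : Prop :=
  MeasurableSet R ∧ (∀ x, (x, x) ∈ R) ∧ (∀ ⦃x y⦄, (x, y) ∈ R → (y, x) ∈ R) ∧
    (∀ ⦃x y z⦄, (x, y) ∈ R → (y, z) ∈ R → (x, z) ∈ R) ∧
    ∀ x, {y | (x, y) ∈ R}.Countable

/-- A subrelation of `R` defined on the Borel set `A` : a Borel equivalence relation on `A`
contained in `R`. -/
def IsSubrelOn (R S : Set (X × X)) (A : Set X) : Prop :=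
  MeasurableSet A ∧ MeasurableSet S ∧ S ⊆ R ∧ S ⊆ A ×ˢ A ∧
    (∀ x ∈ A, (x, x) ∈ S) ∧ (∀ ⦃x y⦄, (x, y) ∈ S → (y, x) ∈ S) ∧
    ∀ ⦃x y z⦄, (x, y) ∈ S → (y, z) ∈ S → (x, z) ∈ S

/-- A subrelation of `R`, defined on some Borel subset of `X`. -/
def IsSubrel (R S : Set (X × X)) : Prop :=
  ∃ A : Set X, IsSubrelOn R S A

/-- Restriction `R|_A = R ∩ (A × A)`. -/
def Restrict (R : Set (X × X)) (A : Set X) : Set (X × X) := R ∩ A ×ˢ A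

/-- The `R`-saturation of a set `A`. -/
def Saturation (R : Set (X × X)) (A : Set X) : Set X := {x | ∃ a ∈ A, (a, x) ∈ R}

/-- A Borel set meeting every class of `R` : a complete domain. -/
def IsCompleteDomain (R : Set (X × X)) (D : Set X) : Prop :=
  MeasurableSet D ∧ (∀ d ∈ D, (d, d) ∈ R) ∧ ∀ x, (x, x) ∈ R → ∃ d ∈ D, (x, d) ∈ R

/-- A Borel set meeting every class of `R` in exactly one point : a fundamental domain. -/
def IsFundamentalDomain (R : Set (X × X)) (D : Set X) : Prop :=
  MeasurableSet D ∧ (∀ d ∈ D, (d, d) ∈ R) ∧ ∀ x, (x, x) ∈ R → ∃! d, d ∈ D ∧ (x, d) ∈ R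

/-- A Borel equivalence relation is smooth if it admits a fundamental domain. -/
def IsSmoothRel (R : Set (X × X)) : Prop := ∃ D, IsFundamentalDomain R D

/-- A graphing of `R` : a symmetric irreflexive Borel subset of `R` generating `R`. -/
def IsGraphing (R G : Set (X × X)) : Prop :=
  MeasurableSet G ∧ G ⊆ R ∧ (∀ ⦃x y⦄, (x, y) ∈ G → (y, x) ∈ G) ∧
    (∀ x, (x, x) ∉ G) ∧
    ∀ p ∈ R, Relation.ReflTransGen (fun a b => (a, b) ∈ G) p.1 p.2

/-- The (simple) graph given by a symmetric irreflexive set of pairs has a cycle : an injective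
closed path of length at least 3. -/
def HasCycle (G : Set (X × X)) : Prop :=
  ∃ (n : ℕ) (c : ℕ → X), 3 ≤ n ∧ (∀ k < n, (c k, c ((k + 1) % n)) ∈ G) ∧
    ∀ k < n, ∀ l < n, c k = c l → k = l

/-- A treeing of `R` : an acyclic graphing. -/
def IsTreeing (R G : Set (X × X)) : Prop := IsGraphing R G ∧ ¬ HasCycle G

/-- `R` is treeable if it admits a treeing. -/
def IsTreeable (R : Set (X × X)) : Prop := ∃ G, IsTreeing R G

/-- `φ` is an element of the full pseudogroup `[[R]]` with (Borel) domain `A` :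
an injective Borel map on `A` whose graph is contained in `R` (its image `φ '' A` is then
automatically Borel and `φ` is a Borel isomorphism of `A` onto `φ '' A`). -/
def MemPseudoGroup (R : Set (X × X)) (A : Set X) (φ : X → X) : Prop :=
  MeasurableSet A ∧ Measurable (A.restrict φ) ∧ Set.InjOn φ A ∧
    ∀ x ∈ A, (x, φ x) ∈ R

/-- Conjugation `φ⁻¹ S φ` of a subrelation `S` (defined on `φ '' A`) by `φ : A → φ '' A`. -/
def Conj (S : Set (X × X)) (A : Set X) (φ : X → X) : Set (X × X) :=
  {p | p.1 ∈ A ∧ p.2 ∈ A ∧ (φ p.1, φ p.2) ∈ S}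

/-- Two subrelations of `R` are stably conjugate if they admit complete domains on which their
restrictions are conjugate by an element of the full pseudogroup of `R`. -/
def StablyConjugate (R S S' : Set (X × X)) : Prop :=
  ∃ (D D' : Set X) (φ : X → X),
    IsCompleteDomain S D ∧ IsCompleteDomain S' D' ∧
    MemPseudoGroup R D' φ ∧ φ '' D' = D ∧
    Restrict S' D' = Conj (Restrict S D) D' φ

/-- `R` is the free product of the countable family `Rf` : the `Rf i` generate `R` and every
cyclic word with consecutive pairs in distinct factors contains a trivial pair.
(Here a word with `m` consecutive pairs is given by its `m + 1` points `x 0, …, x m`.) -/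
def IsCtblFreeProduct {ι : Type*} (R : Set (X × X)) (Rf : ι → Set (X × X)) : Prop :=
  (∀ i, Rf i ⊆ R) ∧
    (∀ p ∈ R, Relation.EqvGen (fun a b => ∃ i, (a, b) ∈ Rf i) p.1 p.2) ∧
    ∀ (m : ℕ) (x : ℕ → X) (idx : ℕ → ι),
      1 ≤ m → x m = x 0 →
      (∀ k < m, (x k, x (k + 1)) ∈ Rf (idx k)) →
      (∀ k, k + 1 < m → idx k ≠ idx (k + 1)) →
      ∃ k < m, x k = x (k + 1)

/-- A reduced word with respect to two subrelations `R1`, `R2` : a tuple of points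
`x 0, …, x m` (`m ≥ 1` consecutive pairs) such that every consecutive pair is `R1`- or
`R2`-equivalent, no two successive pairs are `Rj`-equivalent for the same `j`, and
`x 0 ≠ x 1` when there is a single pair. -/
def Reduced2 (R1 R2 : Set (X × X)) (m : ℕ) (x : ℕ → X) : Prop :=
  1 ≤ m ∧
  (∀ k < m, (x k, x (k + 1)) ∈ R1 ∨ (x k, x (k + 1)) ∈ R2) ∧
  (∀ k, k + 1 < m → ¬((x k, x (k + 1)) ∈ R1 ∧ (x (k + 1), x (k + 2)) ∈ R1)) ∧
  (∀ k, k + 1 < m → ¬((x k, x (k + 1)) ∈ R2 ∧ (x (k + 1), x (k + 2)) ∈ R2)) ∧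
  (m = 1 → x 0 ≠ x 1)

/-- `R` is the free product of two subrelations `R1 ⋆ R2` : `R` is the smallest equivalence
relation containing `R1` and `R2` and the endpoints of every reduced word are distinct. -/
def IsFreeProduct2 (R R1 R2 : Set (X × X)) : Prop :=
  R1 ⊆ R ∧ R2 ⊆ R ∧
  (∀ p ∈ R, Relation.EqvGen (fun a b => (a, b) ∈ R1 ∨ (a, b) ∈ R2) p.1 p.2) ∧
  ∀ m x, Reduced2 R1 R2 m x → x m ≠ x 0

/-- A reduced word with respect to `R1`, `R2` and a common subrelation `R3` : moreover no
consecutive pair is `R3`-equivalent as soon as there are at least two pairs. -/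
def Reduced3 (R1 R2 R3 : Set (X × X)) (m : ℕ) (x : ℕ → X) : Prop :=
  Reduced2 R1 R2 m x ∧ (1 < m → ∀ k < m, (x k, x (k + 1)) ∉ R3)

/-- `R` is the amalgamated product `R1 ⋆_{R3} R2` of `R1` and `R2` over the common
subrelation `R3`. -/
def IsAmalgam (R R1 R2 R3 : Set (X × X)) : Prop :=
  R1 ⊆ R ∧ R2 ⊆ R ∧ R3 ⊆ R1 ∧ R3 ⊆ R2 ∧
  (∀ p ∈ R, Relation.EqvGen (fun a b => (a, b) ∈ R1 ∨ (a, b) ∈ R2) p.1 p.2) ∧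
  ∀ m x, Reduced3 R1 R2 R3 m x → x m ≠ x 0

end Relations

/-- An `R`-fibered space over `X` : a standard Borel space `F` with a Borel,
countable-to-one surjection `π` onto `X`, equipped with a Borel action of `R`. -/
structure RFibSp (X : Type u) [MeasurableSpace X] (R : Set (X × X)) where
  F : Type u
  [mF : MeasurableSpace F]
  [sbF : StandardBorelSpace F]
  π : F → X
  act : X → X → F → F
  measurable_π : Measurable π
  surjective_π : Function.Surjective π
  countable_fibers : ∀ x : X, {t : F | π t = x}.Countable
  measurable_act :
    Measurable fun q : {q : (X × X) × F // q.1 ∈ R ∧ π q.2 = q.1.2} =>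
      act q.1.1.1 q.1.1.2 q.1.2
  act_proj : ∀ ⦃x y : X⦄ (t : F), (x, y) ∈ R → π t = y → π (act x y t) = x
  act_id : ∀ (z : X) (t : F), π t = z → act z z t = t
  act_comp : ∀ ⦃x y z : X⦄ (t : F), (x, y) ∈ R → (y, z) ∈ R → π t = z →
      act x y (act y z t) = act x z t

attribute [instance] RFibSp.mF RFibSp.sbF

namespace RFibSp

variable {X : Type u} [MeasurableSpace X] {R : Set (X × X)}

/-- The induced equivalence relation `R_F` on `F` : `t` and `t'` are related iff
`(π t', π t) · t = t'`. -/
def rel (E : RFibSp X R) : Set (E.F × E.F) :=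
  {p | (E.π p.2, E.π p.1) ∈ R ∧ E.act (E.π p.2) (E.π p.1) p.1 = p.2}

/-- The `R_F`-saturation of a subset of `F`. -/
def sat (E : RFibSp X R) (B : Set E.F) : Set E.F :=
  {t | ∃ b ∈ B, (b, t) ∈ E.rel}

/-- A partial section of `E` defined on the Borel set `A`. -/
def IsPartialSection (E : RFibSp X R) (A : Set X) (s : X → E.F) : Prop :=
  MeasurableSet A ∧ Measurable (A.restrict s) ∧ ∀ x ∈ A, E.π (s x) = x

/-- The stabilizer of a partial section : `x ∼ y` iff `(y, x) · s x = s y`. -/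
def stab (E : RFibSp X R) (A : Set X) (s : X → E.F) : Set (X × X) :=
  {p | p.1 ∈ A ∧ p.2 ∈ A ∧ (p.2, p.1) ∈ R ∧ E.act p.2 p.1 (s p.1) = s p.2}

/-- A partial section is saturating if the `R_F`-saturation of its image is all of `F`. -/
def IsSaturating (E : RFibSp X R) (A : Set X) (s : X → E.F) : Prop :=
  ∀ t : E.F, ∃ x ∈ A, (s x, t) ∈ E.rel

/-- Quasi-free action : the stabilizer of every partial section is smooth. -/
def IsQuasiFree (E : RFibSp X R) : Prop :=
  ∀ (A : Set X) (s : X → E.F), E.IsPartialSection A s → IsSmoothRel (E.stab A s)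

/-- A morphism of `R`-fibered spaces. -/
def IsMorphism (E E' : RFibSp X R) (f : E.F → E'.F) : Prop :=
  Measurable f ∧ (∀ t, E'.π (f t) = E.π t) ∧
    ∀ ⦃x y : X⦄ (t : E.F), (x, y) ∈ R → E.π t = y →
      f (E.act x y t) = E'.act x y (f t)

end RFibSp

/-- An `R`-field of Borel graphs over `X` : vertex and edge `R`-fibered spaces together with
origin, terminal and edge-reversal morphisms. -/
structure RGraphField (X : Type u) [MeasurableSpace X] (R : Set (X × X)) where
  V : RFibSp X R
  Edg : RFibSp X R
  o : Edg.F → V.F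
  t : Edg.F → V.F
  bar : Edg.F → Edg.F
  o_mor : RFibSp.IsMorphism Edg V o
  t_mor : RFibSp.IsMorphism Edg V t
  bar_mor : RFibSp.IsMorphism Edg Edg bar
  bar_bar : ∀ a, bar (bar a) = a
  bar_ne : ∀ a, bar a ≠ a
  o_bar : ∀ a, o (bar a) = t a

namespace RGraphField

variable {X : Type u} [MeasurableSpace X] {R : Set (X × X)}

/-- Adjacency in the fiber over `x`. -/
def Adj (G : RGraphField X R) (x : X) (v w : G.V.F) : Prop :=
  ∃ e : G.Edg.F, G.Edg.π e = x ∧ G.o e = v ∧ G.t e = w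

/-- The fiber over `x` is connected. -/
def FiberConnected (G : RGraphField X R) (x : X) : Prop :=
  ∀ v w : G.V.F, G.V.π v = x → G.V.π w = x → Relation.ReflTransGen (G.Adj x) v w

/-- The fiber over `x` contains a circuit : a reduced closed edge path of positive length. -/
def FiberHasCircuit (G : RGraphField X R) (x : X) : Prop :=
  ∃ (n : ℕ) (c : ℕ → G.Edg.F), 0 < n ∧ (∀ k < n, G.Edg.π (c k) = x) ∧
    (∀ k < n, G.t (c k) = G.o (c ((k + 1) % n))) ∧
    ∀ k < n, c ((k + 1) % n) ≠ G.bar (c k)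

/-- An `R`-arboretum : every fiber is a (nonempty) tree. -/
def IsArboretum (G : RGraphField X R) : Prop :=
  ∀ x : X, G.FiberConnected x ∧ ¬ G.FiberHasCircuit x

/-- An orientation of the edge space : an `R`-invariant Borel set of edges containing exactly
one edge of each pair `{a, ā}`. -/
def IsOrientation (G : RGraphField X R) (P : Set G.Edg.F) : Prop :=
  MeasurableSet P ∧ (∀ a : G.Edg.F, a ∈ P ↔ G.bar a ∉ P) ∧
    ∀ ⦃x y : X⦄ (a : G.Edg.F), (x, y) ∈ R → G.Edg.π a = y → a ∈ P →
      G.Edg.act x y a ∈ P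

end RGraphField

/-!
Fix `x₀ ∈ X`. The canonical isomorphism identifies the oriented edges of the tree `A_{x₀}` with
the `R`-class of `x₀`: the point `z` gives the edge `(x₀, z) · s z`. Two such edges share their
origin (resp. terminus) exactly when their points are `Stab(o ∘ s)`- (resp. `Stab(t ∘ s)`-)
equivalent, and the partition hypothesis makes the tree bipartite between origins and termini.
Connectedness of the tree then gives generation, while a closed reduced word would give a closed
walk through consecutive edges sharing alternately their origins and termini, hence a circuit.
-/

theorem IsCBER.equivalence {X : Type u} [MeasurableSpace X] {R : Set (X × X)} (hR : IsCBER R) :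
    Equivalence fun x y => (x, y) ∈ R :=
  ⟨hR.2.1, fun h => hR.2.2.1 h, fun h₁ h₂ => hR.2.2.2.1 h₁ h₂⟩

theorem Reduced2.ne_succ {X : Type u} {R1 R2 : Set (X × X)} {m : ℕ} {x : ℕ → X}
    (h1 : ∀ z, (z, z) ∈ R1) (h2 : ∀ z, (z, z) ∈ R2) (hx : Reduced2 R1 R2 m x) :
    ∀ k < m, x k ≠ x (k + 1) := by
  obtain ⟨-, hstep, halt1, halt2, hsingle⟩ := hx
  intro k hk heq
  have hdiag : ∀ j, x j = x (j + 1) → (x j, x (j + 1)) ∈ R1 ∧ (x j, x (j + 1)) ∈ R2 :=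
    fun j h => by rw [← h]; exact ⟨h1 _, h2 _⟩
  obtain ⟨hd1, hd2⟩ := hdiag k heq
  rcases Nat.lt_or_ge (k + 1) m with hk1 | hk1
  · rcases hstep (k + 1) hk1 with h | h
    exacts [halt1 k hk1 ⟨hd1, h⟩, halt2 k hk1 ⟨hd2, h⟩]
  · obtain rfl | ⟨j, rfl⟩ : k = 0 ∨ ∃ j, k = j + 1 := by
      cases k <;> simp
    · exact hsingle (by omega) heq
    · rcases hstep j (by omega) with h | h
      exacts [halt1 j (by omega) ⟨h, hd1⟩, halt2 j (by omega) ⟨h, hd2⟩]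

namespace RFibSp

variable {X : Type u} [MeasurableSpace X] {R : Set (X × X)}

def transport (E : RFibSp X R) (s : X → E.F) (x₀ z : X) : E.F := E.act x₀ z (s z)

variable {E E' : RFibSp X R} {s : X → E.F} {x₀ z w : X}

theorem π_transport (hs : ∀ z, E.π (s z) = z) (hz : (x₀, z) ∈ R) :
    E.π (E.transport s x₀ z) = x₀ :=
  E.act_proj _ hz (hs z)

theorem transport_mem_sat (hs : ∀ z, E.π (s z) = z) (hz : (x₀, z) ∈ R) :
    E.transport s x₀ z ∈ E.sat (range s) := by
  refine ⟨s z, mem_range_self z, ?_⟩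
  show (E.π _, E.π (s z)) ∈ R ∧ E.act (E.π _) (E.π (s z)) (s z) = _
  rw [π_transport hs hz, hs]
  exact ⟨hz, rfl⟩

theorem mem_stab_univ_iff (hR : Equivalence fun x y => (x, y) ∈ R) (hs : ∀ z, E.π (s z) = z)
    (hz : (x₀, z) ∈ R) (hw : (x₀, w) ∈ R) :
    (z, w) ∈ E.stab univ s ↔ E.transport s x₀ z = E.transport s x₀ w := by
  have hwz : (w, z) ∈ R := hR.trans (hR.symm hw) hz
  constructor
  · rintro ⟨-, -, -, hact⟩
    rw [transport, transport, ← hact, E.act_comp (s z) hw hwz (hs z)]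
  · intro h
    refine ⟨trivial, trivial, hwz, ?_⟩
    have hback : E.act w x₀ (E.transport s x₀ w) = s w := by
      rw [transport, E.act_comp _ (hR.symm hw) hw (hs w), E.act_id w _ (hs w)]
    rw [← hback, ← h, transport, E.act_comp _ (hR.symm hw) hz (hs z)]

theorem IsMorphism.map_transport {f : E.F → E'.F} (hf : IsMorphism E E' f)
    (hs : ∀ z, E.π (s z) = z) (hz : (x₀, z) ∈ R) :
    f (E.transport s x₀ z) = E'.transport (fun x => f (s x)) x₀ z :=
  hf.2.2 _ hz (hs z)

theorem IsMorphism.mem_stab_univ_iff {f : E.F → E'.F} (hf : IsMorphism E E' f)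
    (hR : Equivalence fun x y => (x, y) ∈ R) (hs : ∀ z, E.π (s z) = z)
    (hz : (x₀, z) ∈ R) (hw : (x₀, w) ∈ R) :
    (z, w) ∈ E'.stab univ (fun x => f (s x)) ↔
      f (E.transport s x₀ z) = f (E.transport s x₀ w) := by
  rw [hf.map_transport hs hz, hf.map_transport hs hw]
  exact RFibSp.mem_stab_univ_iff hR (fun z => (hf.2.1 _).trans (hs z)) hz hw

end RFibSp

namespace RGraphField

variable {X : Type u} [MeasurableSpace X] {R : Set (X × X)} (G : RGraphField X R)
  {P : Set G.Edg.F} {s : X → G.Edg.F} {x₀ z u : X}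

theorem t_bar (a : G.Edg.F) : G.t (G.bar a) = G.o a := by
  rw [← G.o_bar, G.bar_bar]

def Incident (a : G.Edg.F) (v : G.V.F) : Prop := v = G.o a ∨ v = G.t a

variable {G}

theorem Incident.exists_orient {a : G.Edg.F} {v w : G.V.F} (hv : G.Incident a v)
    (hw : G.Incident a w) (hvw : v ≠ w) :
    ∃ c, (c = a ∨ c = G.bar a) ∧ G.o c = v ∧ G.t c = w := by
  rcases hv with rfl | rfl <;> rcases hw with rfl | rfl
  · exact absurd rfl hvw
  · exact ⟨a, Or.inl rfl, rfl, rfl⟩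
  · exact ⟨G.bar a, Or.inr rfl, G.o_bar a, G.t_bar a⟩
  · exact absurd rfl hvw

theorem fiberHasCircuit_of_closed_walk {x : X} (n : ℕ) (c : ℕ → G.Edg.F)
    (hπ : ∀ k ≤ n, G.Edg.π (c k) = x) (hwalk : ∀ k < n, G.t (c k) = G.o (c (k + 1)))
    (hnb : ∀ k < n, c (k + 1) ≠ G.bar (c k)) (hcl : G.t (c n) = G.o (c 0)) :
    G.FiberHasCircuit x := by
  induction n using Nat.strong_induction_on generalizing c with
  | _ n ih =>
  by_cases hwrap : c 0 = G.bar (c n)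
  · -- the wrap-around backtracks: drop the first and the last edge
    obtain _ | _ | n := n
    · exact absurd hwrap.symm (G.bar_ne _)
    · exact absurd (by rw [hwrap, G.bar_bar]) (hnb 0 one_pos)
    · refine ih n (by omega) (fun k => c (k + 1)) (fun k hk => hπ _ (by omega))
        (fun k hk => hwalk _ (by omega)) (fun k hk => hnb _ (by omega)) ?_
      rw [hwalk (n + 1) (by omega), show c (n + 2) = G.bar (c 0) by rw [hwrap, G.bar_bar],
        G.o_bar]
      exact hwalk 0 (by omega)
  · refine ⟨n + 1, c, n.succ_pos, fun k hk => hπ k (by omega), fun k hk => ?_, fun k hk => ?_⟩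
    all_goals obtain hkn | rfl := Nat.lt_or_eq_of_le (Nat.le_of_lt_succ hk)
    · rw [Nat.mod_eq_of_lt (by omega)]; exact hwalk k hkn
    · rw [Nat.mod_self]; exact hcl
    · rw [Nat.mod_eq_of_lt (by omega)]; exact hnb k hkn
    · rw [Nat.mod_self]; exact hwrap

theorem bar_injective : Function.Injective G.bar :=
  Function.LeftInverse.injective G.bar_bar

theorem fiberHasCircuit_of_closed_vertex_walk {x : X} (n : ℕ) (v : ℕ → G.V.F) (e : ℕ → G.Edg.F)
    (hπ : ∀ k ≤ n, G.Edg.π (e k) = x)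
    (hinc : ∀ k ≤ n, G.Incident (e k) (v k) ∧ G.Incident (e k) (v (k + 1)))
    (hv : ∀ k ≤ n, v k ≠ v (k + 1))
    (he : ∀ k < n, e (k + 1) ≠ e k ∧ e (k + 1) ≠ G.bar (e k))
    (hcl : v (n + 1) = v 0) : G.FiberHasCircuit x := by
  have : Nonempty G.Edg.F := ⟨e 0⟩
  choose! c hc using fun k hk => (hinc k hk).1.exists_orient (hinc k hk).2 (hv k hk)
  refine fiberHasCircuit_of_closed_walk n c (fun k hk => ?_) (fun k hk => ?_) (fun k hk => ?_) ?_
  · rcases (hc k hk).1 with h | h <;> rw [h]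
    exacts [hπ k hk, (G.bar_mor.2.1 _).trans (hπ k hk)]
  · rw [(hc k hk.le).2.2, (hc (k + 1) hk).2.1]
  · intro h
    obtain ⟨hne, hne_bar⟩ := he k hk
    rcases (hc k hk.le).1 with h₀ | h₀ <;> rcases (hc (k + 1) hk).1 with h₁ | h₁ <;>
      rw [h₀, h₁] at h
    · exact hne_bar h
    · exact hne (bar_injective h)
    · exact hne (by rwa [G.bar_bar] at h)
    · exact hne_bar (bar_injective h)
  · rw [(hc n le_rfl).2.2, hcl, (hc 0 (Nat.zero_le n)).2.1]

theorem fiberHasCircuit_of_closed_alternating {x : X} {m : ℕ} (hm : 1 ≤ m) (a : ℕ → G.Edg.F)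
    (hπ : ∀ k ≤ m, G.Edg.π (a k) = x)
    (hbip : ∀ j ≤ m, ∀ k ≤ m, G.o (a j) ≠ G.t (a k))
    (hstep : ∀ k < m, G.o (a k) = G.o (a (k + 1)) ∨ G.t (a k) = G.t (a (k + 1)))
    (halt_o : ∀ k, k + 1 < m →
      ¬(G.o (a k) = G.o (a (k + 1)) ∧ G.o (a (k + 1)) = G.o (a (k + 2))))
    (halt_t : ∀ k, k + 1 < m →
      ¬(G.t (a k) = G.t (a (k + 1)) ∧ G.t (a (k + 1)) = G.t (a (k + 2))))
    (hne : ∀ k < m, a (k + 1) ≠ a k ∧ a (k + 1) ≠ G.bar (a k))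
    (hcl : a m = a 0) : G.FiberHasCircuit x := by
  classical
  set v : ℕ → G.V.F := fun k => if G.o (a k) = G.o (a (k + 1)) then G.o (a k) else G.t (a k)
  have hinc : ∀ k < m, G.Incident (a k) (v k) ∧ G.Incident (a (k + 1)) (v k) := by
    intro k hk
    simp only [v]
    split_ifs with ho
    · exact ⟨Or.inl rfl, Or.inl ho⟩
    · exact ⟨Or.inr rfl, Or.inr ((hstep k hk).resolve_left ho)⟩
  have hv : ∀ k, k + 1 < m → v k ≠ v (k + 1) := by
    intro k hk
    simp only [v]
    split_ifs with h₁ h₂ h₂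
    · exact absurd ⟨h₁, h₂⟩ (halt_o k hk)
    · exact hbip k (by omega) (k + 1) (by omega)
    · exact (hbip (k + 1) (by omega) k (by omega)).symm
    · exact absurd ⟨(hstep k (by omega)).resolve_left h₁, (hstep (k + 1) hk).resolve_left h₂⟩
        (halt_t k hk)
  obtain rfl | ⟨n, rfl⟩ : m = 1 ∨ ∃ n, m = n + 2 := by
    rcases m with _ | _ | n <;> simp_all
  · exact absurd hcl (hne 0 one_pos).1
  by_cases hwrap : v (n + 1) = v 0
  · exact fiberHasCircuit_of_closed_vertex_walk n v (fun k => a (k + 1))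
      (fun k hk => hπ _ (by omega))
      (fun k hk => ⟨(hinc k (by omega)).2, (hinc (k + 1) (by omega)).1⟩)
      (fun k hk => hv k (by omega)) (fun k hk => hne (k + 1) (by omega)) hwrap
  · -- the two ends of the word meet at the edge `a (n + 2) = a 0` from opposite sides
    refine fiberHasCircuit_of_closed_vertex_walk (n + 1) (fun k => if k = n + 2 then v 0 else v k)
      (fun k => a (k + 1)) (fun k hk => hπ _ (by omega)) (fun k hk => ?_) (fun k hk => ?_)
      (fun k hk => hne (k + 1) (by omega)) (by simp)
    all_goals obtain hkn | rfl := Nat.lt_or_eq_of_le hk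
    · simp only [if_neg (show k ≠ n + 2 by omega), if_neg (show k + 1 ≠ n + 2 by omega)]
      exact ⟨(hinc k (by omega)).2, (hinc (k + 1) (by omega)).1⟩
    · simp only [if_neg (show n + 1 ≠ n + 2 by omega)]
      exact ⟨(hinc (n + 1) (by omega)).2, hcl ▸ (hinc 0 (by omega)).1⟩
    · simp only [if_neg (show k ≠ n + 2 by omega), if_neg (show k + 1 ≠ n + 2 by omega)]
      exact hv k (by omega)
    · simpa using hwrap

/-- `(x, y) ↦ (x, y) · s y` is an isomorphism of the canonical left `R`-fibered space onto the
orientation `P`. -/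
structure IsCanonicalOrientation (G : RGraphField X R) (P : Set G.Edg.F) (s : X → G.Edg.F) :
    Prop where
  isOrientation : G.IsOrientation P
  π_section : ∀ x, G.Edg.π (s x) = x
  transport_mem : ∀ ⦃x y : X⦄, (x, y) ∈ R → G.Edg.transport s x y ∈ P
  transport_injective : ∀ ⦃x y x' y' : X⦄, (x, y) ∈ R → (x', y') ∈ R →
    G.Edg.transport s x y = G.Edg.transport s x' y' → (x, y) = (x', y')
  exists_transport_eq : ∀ e ∈ P, ∃ p : X × X, p ∈ R ∧ e = G.Edg.transport s p.1 p.2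

namespace IsCanonicalOrientation

theorem transport_ne (hc : G.IsCanonicalOrientation P s) (hz : (x₀, z) ∈ R)
    (hu : (x₀, u) ∈ R) (hzu : z ≠ u) :
    G.Edg.transport s x₀ u ≠ G.Edg.transport s x₀ z ∧
      G.Edg.transport s x₀ u ≠ G.bar (G.Edg.transport s x₀ z) :=
  ⟨fun h => hzu (congrArg Prod.snd (hc.transport_injective hu hz h)).symm,
    fun h => (hc.isOrientation.2.1 _).mp (hc.transport_mem hz) (h ▸ hc.transport_mem hu)⟩

theorem exists_eq_transport (hc : G.IsCanonicalOrientation P s) {a : G.Edg.F}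
    (ha : G.Edg.π a = x₀) :
    ∃ z, (x₀, z) ∈ R ∧ (a = G.Edg.transport s x₀ z ∨ a = G.bar (G.Edg.transport s x₀ z)) := by
  have key : ∀ b ∈ P, G.Edg.π b = x₀ → ∃ z, (x₀, z) ∈ R ∧ b = G.Edg.transport s x₀ z := by
    rintro b hb rfl
    obtain ⟨⟨y, z⟩, hyz, rfl⟩ := hc.exists_transport_eq b hb
    rw [RFibSp.π_transport hc.π_section hyz]
    exact ⟨z, hyz, rfl⟩
  by_cases ha' : a ∈ P
  · obtain ⟨z, hz, h⟩ := key a ha' ha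
    exact ⟨z, hz, Or.inl h⟩
  · obtain ⟨z, hz, h⟩ := key (G.bar a) (not_not.mp (mt (hc.isOrientation.2.1 a).mpr ha'))
      ((G.bar_mor.2.1 a).trans ha)
    exact ⟨z, hz, Or.inr (by rw [← h, G.bar_bar])⟩

end IsCanonicalOrientation

theorem o_transport_ne_t_transport (hs : ∀ z, G.Edg.π (s z) = z)
    (hdisj : Disjoint (G.V.sat (range fun x => G.o (s x))) (G.V.sat (range fun x => G.t (s x))))
    (hz : (x₀, z) ∈ R) (hu : (x₀, u) ∈ R) :
    G.o (G.Edg.transport s x₀ z) ≠ G.t (G.Edg.transport s x₀ u) := by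
  rw [G.o_mor.map_transport hs hz, G.t_mor.map_transport hs hu]
  exact disjoint_iff_forall_ne.mp hdisj
    (RFibSp.transport_mem_sat (fun z => (G.o_mor.2.1 _).trans (hs z)) hz)
    (RFibSp.transport_mem_sat (fun z => (G.t_mor.2.1 _).trans (hs z)) hu)

theorem mem_stab_or_mem_stab_of_incident (hR : Equivalence fun x y => (x, y) ∈ R)
    (hs : ∀ z, G.Edg.π (s z) = z)
    (hdisj : Disjoint (G.V.sat (range fun x => G.o (s x))) (G.V.sat (range fun x => G.t (s x))))
    (hz : (x₀, z) ∈ R) (hu : (x₀, u) ∈ R) {v : G.V.F}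
    (hvz : G.Incident (G.Edg.transport s x₀ z) v) (hvu : G.Incident (G.Edg.transport s x₀ u) v) :
    (z, u) ∈ G.V.stab univ (fun x => G.o (s x)) ∨ (z, u) ∈ G.V.stab univ (fun x => G.t (s x)) := by
  rcases hvz with rfl | rfl <;> rcases hvu with h | h
  · exact Or.inl ((G.o_mor.mem_stab_univ_iff hR hs hz hu).mpr h)
  · exact absurd h (o_transport_ne_t_transport hs hdisj hz hu)
  · exact absurd h.symm (o_transport_ne_t_transport hs hdisj hu hz)
  · exact Or.inr ((G.t_mor.mem_stab_univ_iff hR hs hz hu).mpr h)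

theorem IsCanonicalOrientation.eqvGen_stab_of_reflTransGen (hR : Equivalence fun x y => (x, y) ∈ R)
    (hc : G.IsCanonicalOrientation P s)
    (hdisj : Disjoint (G.V.sat (range fun x => G.o (s x))) (G.V.sat (range fun x => G.t (s x))))
    {v w : G.V.F} (hvw : Relation.ReflTransGen (G.Adj x₀) v w) (hz : (x₀, z) ∈ R)
    (hu : (x₀, u) ∈ R) (hv : G.Incident (G.Edg.transport s x₀ z) v)
    (hw : G.Incident (G.Edg.transport s x₀ u) w) :
    Relation.EqvGen (fun a b => (a, b) ∈ G.V.stab univ (fun x => G.o (s x)) ∨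
      (a, b) ∈ G.V.stab univ (fun x => G.t (s x))) z u := by
  induction hvw generalizing u with
  | refl => exact .rel _ _ (mem_stab_or_mem_stab_of_incident hR hc.π_section hdisj hz hu hv hw)
  | tail _ hbc ih =>
    obtain ⟨a, ha, rfl, rfl⟩ := hbc
    obtain ⟨y, hy, rfl | rfl⟩ := hc.exists_eq_transport ha
    · exact .trans _ _ _ (ih hy (Or.inl rfl))
        (.rel _ _ (mem_stab_or_mem_stab_of_incident hR hc.π_section hdisj hy hu (Or.inr rfl) hw))
    · exact .trans _ _ _ (ih hy (Or.inr (G.o_bar _)))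
        (.rel _ _ (mem_stab_or_mem_stab_of_incident hR hc.π_section hdisj hy hu
          (Or.inl (G.t_bar _)) hw))

theorem IsCanonicalOrientation.reduced2_last_ne_first (hR : Equivalence fun x y => (x, y) ∈ R)
    (hc : G.IsCanonicalOrientation P s)
    (hdisj : Disjoint (G.V.sat (range fun x => G.o (s x))) (G.V.sat (range fun x => G.t (s x))))
    {m : ℕ} {w : ℕ → X} (hx : ¬ G.FiberHasCircuit (w 0))
    (hw : Reduced2 (G.V.stab univ fun x => G.o (s x)) (G.V.stab univ fun x => G.t (s x)) m w) :
    w m ≠ w 0 := by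
  intro hcl
  have hs := hc.π_section
  have hstep : ∀ k < m, (w k, w (k + 1)) ∈ R := fun k hk =>
    hR.symm ((hw.2.1 k hk).elim (fun h => h.2.2.1) (fun h => h.2.2.1))
  have hbase : ∀ k ≤ m, (w 0, w k) ∈ R := by
    intro k hk
    induction k with
    | zero => exact hR.refl _
    | succ k ih => exact hR.trans (ih (by omega)) (hstep k (by omega))
  have hiff_o : ∀ k < m, (w k, w (k + 1)) ∈ G.V.stab univ (fun x => G.o (s x)) ↔
      G.o (G.Edg.transport s (w 0) (w k)) = G.o (G.Edg.transport s (w 0) (w (k + 1))) :=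
    fun k hk => G.o_mor.mem_stab_univ_iff hR hs (hbase k (by omega)) (hbase (k + 1) hk)
  have hiff_t : ∀ k < m, (w k, w (k + 1)) ∈ G.V.stab univ (fun x => G.t (s x)) ↔
      G.t (G.Edg.transport s (w 0) (w k)) = G.t (G.Edg.transport s (w 0) (w (k + 1))) :=
    fun k hk => G.t_mor.mem_stab_univ_iff hR hs (hbase k (by omega)) (hbase (k + 1) hk)
  have hne := hw.ne_succ
    (fun z => (G.o_mor.mem_stab_univ_iff hR hs (hR.refl z) (hR.refl z)).mpr rfl)
    (fun z => (G.t_mor.mem_stab_univ_iff hR hs (hR.refl z) (hR.refl z)).mpr rfl)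
  refine hx (fiberHasCircuit_of_closed_alternating hw.1 (fun k => G.Edg.transport s (w 0) (w k))
    (fun k hk => RFibSp.π_transport hs (hbase k hk))
    (fun j hj k hk => o_transport_ne_t_transport hs hdisj (hbase j hj) (hbase k hk))
    (fun k hk => (hw.2.1 k hk).imp (hiff_o k hk).mp (hiff_t k hk).mp)
    (fun k hk => ?_) (fun k hk => ?_)
    (fun k hk => hc.transport_ne (hbase k hk.le) (hbase (k + 1) hk) (hne k hk)) (by rw [hcl]))
  · rw [← hiff_o k (by omega), ← hiff_o (k + 1) hk]
    exact hw.2.2.1 k hk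
  · rw [← hiff_t k (by omega), ← hiff_t (k + 1) hk]
    exact hw.2.2.2.1 k hk

end RGraphField

theorem freeProduct_of_canonical_oriented_edges_general
    {X : Type u} [MeasurableSpace X]
    {R : Set (X × X)} (hR : IsCBER R)
    (G : RGraphField X R) (hArb : G.IsArboretum)
    (P : Set G.Edg.F) (hP : G.IsOrientation P)
    (s : X → G.Edg.F) (hs : G.Edg.IsPartialSection Set.univ s)
    -- `(x, y) ∈ R ↦ (x, y) · s y` is an isomorphism of the canonical left
    -- `R`-fibered space onto `A^{1+}`, sending the diagonal to `s` :
    (hinto : ∀ ⦃x y : X⦄, (x, y) ∈ R → G.Edg.act x y (s y) ∈ P)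
    (hinj : ∀ ⦃x y x' y' : X⦄, (x, y) ∈ R → (x', y') ∈ R →
      G.Edg.act x y (s y) = G.Edg.act x' y' (s y') → (x, y) = (x', y'))
    (hsurj : ∀ e ∈ P, ∃ p : X × X, p ∈ R ∧ e = G.Edg.act p.1 p.2 (s p.2))
    -- the saturations of `o (d (X))` and `t (d (X))` partition the vertex space :
    (hdisj : Disjoint (G.V.sat (Set.range fun x => G.o (s x)))
      (G.V.sat (Set.range fun x => G.t (s x)))) :
    IsFreeProduct2 R (G.V.stab Set.univ fun x => G.o (s x))
      (G.V.stab Set.univ fun x => G.t (s x)) := by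
  have hRe := hR.equivalence
  have hc : G.IsCanonicalOrientation P s :=
    ⟨hP, fun x => hs.2.2 x trivial, hinto, hinj, hsurj⟩
  refine ⟨fun p hp => hRe.symm hp.2.2.1, fun p hp => hRe.symm hp.2.2.1, ?_,
    fun m w hw => hc.reduced2_last_ne_first hRe hdisj (hArb (w 0)).2 hw⟩
  rintro ⟨x, y⟩ hxy
  have hπ : ∀ z, (x, z) ∈ R → G.V.π (G.o (G.Edg.transport s x z)) = x := fun z hz =>
    (G.o_mor.2.1 _).trans (RFibSp.π_transport hc.π_section hz)
  exact hc.eqvGen_stab_of_reflTransGen hRe hdisj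
    ((hArb x).1 _ _ (hπ x (hRe.refl x)) (hπ y hxy)) (hRe.refl x) hxy (Or.inl rfl) (Or.inl rfl)

/-- If `R` acts on an `R`-arboretum whose oriented edge space is isomorphic to the canonical
left `R`-fibered space (with diagonal section `s`) and whose vertex space is partitioned by the
saturations of the origin and terminal sections, then `R` is the free product of the
stabilizers of the two vertex sections. -/
theorem freeProduct_of_canonical_oriented_edges
    {X : Type u} [MeasurableSpace X] [StandardBorelSpace X]
    {R : Set (X × X)} (hR : IsCBER R)
    (G : RGraphField X R) (hArb : G.IsArboretum)
    (P : Set G.Edg.F) (hP : G.IsOrientation P)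
    (s : X → G.Edg.F) (hs : G.Edg.IsPartialSection Set.univ s)
    -- `(x, y) ∈ R ↦ (x, y) · s y` is an isomorphism of the canonical left
    -- `R`-fibered space onto `A^{1+}`, sending the diagonal to `s` :
    (hinto : ∀ ⦃x y : X⦄, (x, y) ∈ R → G.Edg.act x y (s y) ∈ P)
    (hinj : ∀ ⦃x y x' y' : X⦄, (x, y) ∈ R → (x', y') ∈ R →
      G.Edg.act x y (s y) = G.Edg.act x' y' (s y') → (x, y) = (x', y'))
    (hsurj : ∀ e ∈ P, ∃ p : X × X, p ∈ R ∧ e = G.Edg.act p.1 p.2 (s p.2))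
    -- the saturations of `o (d (X))` and `t (d (X))` partition the vertex space :
    (hdisj : Disjoint (G.V.sat (Set.range fun x => G.o (s x)))
      (G.V.sat (Set.range fun x => G.t (s x))))
    (hcover : G.V.sat (Set.range fun x => G.o (s x)) ∪
      G.V.sat (Set.range fun x => G.t (s x)) = Set.univ) :
    IsFreeProduct2 R (G.V.stab Set.univ fun x => G.o (s x))
      (G.V.stab Set.univ fun x => G.t (s x)) :=
  freeProduct_of_canonical_oriented_edges_general hR G hArb P hP s hs hinto hinj hsurj hdisj
end

section
/- Let F be an R-fibered space over X. If there exists a Borel section s : X → F such that s(X) is a fundamental domain of the induced equivalence relation R_F on F, then F is isomorphic, as an R-fibered space, to the canonical left R-fibered space. -/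
open Set

universe u

/-
A section `s` whose image is a fundamental domain of `R_F` makes the orbit map
`R → F, (x, y) ↦ (x, y) · s y` a bijective Borel morphism from the canonical left `R`-fibered
space: surjectivity says every point of `F` lies in the orbit of some `s y`, injectivity is the
uniqueness of `y` together with `π ((x, y) · s y) = x`. Since `R` is a Borel subset of the
standard Borel space `X × X`, the Lusin–Souslin theorem makes this bijection a Borel
isomorphism, and its inverse is the required isomorphism onto `R`.
-/

noncomputable def MeasurableEmbedding.equivOfSurjective {α β : Type*} [MeasurableSpace α]
    [MeasurableSpace β] {g : α → β} (hg : MeasurableEmbedding g) (hsurj : Function.Surjective g) :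
    α ≃ᵐ β where
  toEquiv := Equiv.ofBijective g ⟨hg.injective, hsurj⟩
  measurable_toFun := hg.measurable
  measurable_invFun u hu := by
    rw [← Equiv.image_eq_preimage_symm]
    exact hg.measurableSet_image' hu

namespace RFibSp

variable {X : Type u} [MeasurableSpace X] {R : Set (X × X)} (E : RFibSp X R)

theorem IsPartialSection.measurable_of_univ {E : RFibSp X R} {s : X → E.F}
    (hs : E.IsPartialSection univ s) : Measurable s := by
  have h : Measurable fun x : X => (⟨x, mem_univ x⟩ : (univ : Set X)) := measurable_id.subtype_mk
  exact hs.2.1.comp h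

def orbitMap (s : X → E.F) (p : R) : E.F :=
  E.act p.1.1 p.1.2 (s p.1.2)

variable {E} {s : X → E.F}

theorem π_orbitMap (hπs : ∀ x, E.π (s x) = x) (p : R) : E.π (E.orbitMap s p) = p.1.1 :=
  E.act_proj _ p.2 (hπs _)

theorem orbitMap_mem_rel (hπs : ∀ x, E.π (s x) = x) (p : R) :
    (s p.1.2, E.orbitMap s p) ∈ E.rel := by
  refine ⟨?_, ?_⟩ <;> rw [π_orbitMap hπs, hπs]
  exacts [p.2, rfl]

theorem act_orbitMap (hπs : ∀ x, E.π (s x) = x) {x : X} (p : R) (hx : (x, p.1.1) ∈ R)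
    (hxp : (x, p.1.2) ∈ R) :
    E.act x p.1.1 (E.orbitMap s p) = E.orbitMap s ⟨(x, p.1.2), hxp⟩ :=
  E.act_comp _ hx p.2 (hπs _)

theorem measurable_orbitMap (hsm : Measurable s) (hπs : ∀ x, E.π (s x) = x) :
    Measurable (E.orbitMap s) := by
  have h : Measurable fun p : R => (⟨((p : X × X), s p.1.2), p.2, hπs _⟩ :
      {q : (X × X) × E.F // q.1 ∈ R ∧ E.π q.2 = q.1.2}) :=
    (measurable_subtype_coe.prodMk
      (hsm.comp (measurable_snd.comp measurable_subtype_coe))).subtype_mk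
  exact E.measurable_act.comp h

theorem injective_orbitMap (hπs : ∀ x, E.π (s x) = x)
    (hfd : ∀ t : E.F, ∃! x : X, (s x, t) ∈ E.rel) : Function.Injective (E.orbitMap s) := by
  rintro ⟨⟨x, y⟩, hp⟩ ⟨⟨x', y'⟩, hp'⟩ h
  have hx : x = x' := by
    simpa only [π_orbitMap hπs] using congrArg E.π h
  have hy : y = y' :=
    (hfd _).unique (orbitMap_mem_rel hπs ⟨(x, y), hp⟩) (h ▸ orbitMap_mem_rel hπs ⟨(x', y'), hp'⟩)
  subst hx hy
  rfl

theorem surjective_orbitMap (hπs : ∀ x, E.π (s x) = x)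
    (hfd : ∀ t : E.F, ∃! x : X, (s x, t) ∈ E.rel) : Function.Surjective (E.orbitMap s) := by
  intro t
  obtain ⟨y, ⟨hty, hact⟩, -⟩ := hfd t
  rw [hπs] at hty hact
  exact ⟨⟨(E.π t, y), hty⟩, hact⟩

end RFibSp

open RFibSp in
/-- An `R`-fibered space admitting a Borel section whose image is a fundamental domain of the
induced relation is isomorphic to the canonical left `R`-fibered space. -/
theorem iso_canonical_of_section_fundamental_domain
    {X : Type u} [MeasurableSpace X] [StandardBorelSpace X]
    {R : Set (X × X)} (hR : IsCBER R) (E : RFibSp X R)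
    (s : X → E.F) (hs : E.IsPartialSection Set.univ s)
    -- `s(X)` is a fundamental domain of `R_F` :
    (hfd : ∀ t : E.F, ∃! x : X, (s x, t) ∈ E.rel) :
    ∃ f : E.F → X × X,
      Measurable f ∧ Function.Injective f ∧
      (∀ t : E.F, f t ∈ R) ∧ (∀ p ∈ R, ∃ t : E.F, f t = p) ∧
      (∀ t : E.F, (f t).1 = E.π t) ∧
      ∀ ⦃x y : X⦄ (t : E.F), (x, y) ∈ R → E.π t = y →
        f (E.act x y t) = (x, (f t).2) := by
  obtain ⟨hRmeas, -, -, hRtrans, -⟩ := hR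
  have hπs : ∀ x, E.π (s x) = x := fun x => hs.2.2 x (mem_univ x)
  have : StandardBorelSpace R := hRmeas.standardBorel
  let e : R ≃ᵐ E.F :=
    ((measurable_orbitMap hs.measurable_of_univ hπs).measurableEmbedding
      (injective_orbitMap hπs hfd)).equivOfSurjective (surjective_orbitMap hπs hfd)
  have he : ∀ p, e p = E.orbitMap s p := fun _ => rfl
  refine ⟨fun t => e.symm t, measurable_subtype_coe.comp e.symm.measurable,
    fun t t' h => e.symm.injective (Subtype.ext h), fun t => (e.symm t).2,
    fun p hp => ⟨e ⟨p, hp⟩, by simp⟩, fun t => ?_, fun x y t hxy hty => ?_⟩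
  · rw [← π_orbitMap hπs, ← he, e.apply_symm_apply]
  · obtain ⟨p, rfl⟩ := e.surjective t
    have hp : p.1.1 = y := by rw [← π_orbitMap hπs, ← he, hty]
    subst hp
    dsimp only
    rw [he, act_orbitMap hπs p hxy (hRtrans hxy p.2), ← he, ← he, e.symm_apply_apply,
      e.symm_apply_apply]
end

section
/- Let F₁ and F₂ be R-fibered spaces over X, let A ⊆ X be a complete domain of R, and let s₁ : A → F₁ and s₂ : A → F₂ be partial sections with s₁ saturating. Then there exists a morphism f : F₁ → F₂ of R-fibered spaces with f ∘ s₁ = s₂ if and only if Stab_R(s₁) is a subrelation of Stab_R(s₂). If moreover s₂ is saturating, then any such morphism f is surjective. -/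
open Set

universe u

/-!
A morphism `f` with `f ∘ s₁ = s₂` is forced: every `t ∈ F₁` is `(π t, x) · s₁ x` for some
`x ∈ A`, so `f t = (π t, x) · s₂ x`. This prescription does not depend on the choice of `x`
exactly when `Stab(s₁) ⊆ Stab(s₂)`, and it is then automatically equivariant. It is Borel by
Suslin's theorem, because it factors through the Borel surjection `(y, x) ↦ (y, x) · s₁ x` from
the standard Borel space `{(y, x) ∈ R | x ∈ A}` onto `F₁`.
-/

namespace RFibSp

variable {X : Type u} [MeasurableSpace X] {R : Set (X × X)}

section Rel

variable (E : RFibSp X R)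

theorem mem_rel {t t' : E.F} :
    (t, t') ∈ E.rel ↔ (E.π t', E.π t) ∈ R ∧ E.act (E.π t') (E.π t) t = t' :=
  Iff.rfl

theorem rel_symm (hsymm : ∀ ⦃x y⦄, (x, y) ∈ R → (y, x) ∈ R) {t t' : E.F}
    (h : (t, t') ∈ E.rel) : (t', t) ∈ E.rel := by
  obtain ⟨hR, hact⟩ := E.mem_rel.1 h
  refine E.mem_rel.2 ⟨hsymm hR, ?_⟩
  calc E.act (E.π t) (E.π t') t' = E.act (E.π t) (E.π t') (E.act (E.π t') (E.π t) t) := by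
        rw [hact]
    _ = t := by rw [E.act_comp t (hsymm hR) hR rfl, E.act_id _ t rfl]

theorem rel_trans (htrans : ∀ ⦃x y z⦄, (x, y) ∈ R → (y, z) ∈ R → (x, z) ∈ R)
    {t t' t'' : E.F} (h : (t, t') ∈ E.rel) (h' : (t', t'') ∈ E.rel) : (t, t'') ∈ E.rel := by
  obtain ⟨hR, hact⟩ := E.mem_rel.1 h
  obtain ⟨hR', hact'⟩ := E.mem_rel.1 h'
  refine E.mem_rel.2 ⟨htrans hR' hR, ?_⟩
  calc E.act (E.π t'') (E.π t) t = E.act (E.π t'') (E.π t') (E.act (E.π t') (E.π t) t) :=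
        (E.act_comp t hR' hR rfl).symm
    _ = t'' := by rw [hact, hact']

theorem mem_rel_act {x : X} {t : E.F} (h : (x, E.π t) ∈ R) : (t, E.act x (E.π t) t) ∈ E.rel := by
  rw [mem_rel, E.act_proj t h rfl]
  exact ⟨h, rfl⟩

theorem mem_stab_iff {A : Set X} {s : X → E.F} (hs : ∀ x ∈ A, E.π (s x) = x) {x y : X} :
    (x, y) ∈ E.stab A s ↔ x ∈ A ∧ y ∈ A ∧ (s x, s y) ∈ E.rel := by
  rw [mem_rel]
  constructor
  · rintro ⟨hx, hy, h⟩
    rw [hs x hx, hs y hy]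
    exact ⟨hx, hy, h⟩
  · rintro ⟨hx, hy, h⟩
    rw [hs x hx, hs y hy] at h
    exact ⟨hx, hy, h⟩

theorem measurable_act_section {A : Set X} {s : X → E.F} (hs : E.IsPartialSection A s) :
    Measurable fun q : {q : X × X // q ∈ R ∧ q.2 ∈ A} => E.act q.1.1 q.1.2 (s q.1.2) := by
  have hsq : Measurable fun q : {q : X × X // q ∈ R ∧ q.2 ∈ A} => s q.1.2 :=
    hs.2.1.comp (measurable_subtype_coe.snd.subtype_mk (h := fun q => q.2.2))
  exact E.measurable_act.comp ((measurable_subtype_coe.prodMk hsq).subtype_mk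
    (h := fun q => ⟨q.2.1, hs.2.2 _ q.2.2⟩))

end Rel

section Morphism

variable {E₁ E₂ : RFibSp X R} {A : Set X} {s₁ : X → E₁.F} {s₂ : X → E₂.F} {f : E₁.F → E₂.F}

theorem IsMorphism.stab_subset (hf : IsMorphism E₁ E₂ f) (hs₁ : ∀ x ∈ A, E₁.π (s₁ x) = x)
    (hfs : ∀ x ∈ A, f (s₁ x) = s₂ x) : E₁.stab A s₁ ⊆ E₂.stab A s₂ := by
  rintro ⟨x, y⟩ ⟨hx, hy, hyx, hstab⟩
  refine ⟨hx, hy, hyx, ?_⟩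
  rw [← hfs x hx, ← hfs y hy, ← hstab, hf.2.2 _ hyx (hs₁ x hx)]

theorem IsMorphism.surjective_of_isSaturating (hf : IsMorphism E₁ E₂ f)
    (hs₁ : ∀ x ∈ A, E₁.π (s₁ x) = x) (hs₂ : ∀ x ∈ A, E₂.π (s₂ x) = x)
    (hfs : ∀ x ∈ A, f (s₁ x) = s₂ x) (hsat : E₂.IsSaturating A s₂) : Function.Surjective f := by
  intro u
  obtain ⟨x, hx, hR, hact⟩ := hsat u
  rw [hs₂ x hx] at hR hact
  exact ⟨E₁.act (E₂.π u) x (s₁ x), by rw [hf.2.2 _ hR (hs₁ x hx), hfs x hx, hact]⟩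

end Morphism

section InducedMap

variable {E₁ E₂ : RFibSp X R} {A : Set X} {s₁ : X → E₁.F}

noncomputable def inducedMap (hsat : E₁.IsSaturating A s₁) (s₂ : X → E₂.F) (t : E₁.F) : E₂.F :=
  E₂.act (E₁.π t) (hsat t).choose (s₂ (hsat t).choose)

variable (hsat : E₁.IsSaturating A s₁) {s₂ : X → E₂.F}

theorem π_inducedMap (hs₁ : ∀ x ∈ A, E₁.π (s₁ x) = x) (hs₂ : ∀ x ∈ A, E₂.π (s₂ x) = x)
    (t : E₁.F) : E₂.π (inducedMap hsat s₂ t) = E₁.π t := by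
  obtain ⟨hc, hR, -⟩ := (hsat t).choose_spec
  rw [hs₁ _ hc] at hR
  exact E₂.act_proj _ hR (hs₂ _ hc)

theorem inducedMap_eq (hsymm : ∀ ⦃x y⦄, (x, y) ∈ R → (y, x) ∈ R)
    (htrans : ∀ ⦃x y z⦄, (x, y) ∈ R → (y, z) ∈ R → (x, z) ∈ R)
    (hs₁ : ∀ x ∈ A, E₁.π (s₁ x) = x) (hs₂ : ∀ x ∈ A, E₂.π (s₂ x) = x)
    (hstab : E₁.stab A s₁ ⊆ E₂.stab A s₂) {t : E₁.F} {x : X} (hx : x ∈ A)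
    (hxt : (s₁ x, t) ∈ E₁.rel) : inducedMap hsat s₂ t = E₂.act (E₁.π t) x (s₂ x) := by
  obtain ⟨hc, hct⟩ := (hsat t).choose_spec
  set c := (hsat t).choose
  have hxc : (x, c) ∈ E₂.stab A s₂ :=
    hstab ((E₁.mem_stab_iff hs₁).2 ⟨hx, hc, E₁.rel_trans htrans hxt (E₁.rel_symm hsymm hct)⟩)
  have htc : (E₁.π t, c) ∈ R := hs₁ c hc ▸ hct.1
  rw [inducedMap, ← hxc.2.2.2, E₂.act_comp _ htc hxc.2.2.1 (hs₂ x hx)]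

theorem inducedMap_section (hrefl : ∀ x, (x, x) ∈ R)
    (hsymm : ∀ ⦃x y⦄, (x, y) ∈ R → (y, x) ∈ R)
    (htrans : ∀ ⦃x y z⦄, (x, y) ∈ R → (y, z) ∈ R → (x, z) ∈ R)
    (hs₁ : ∀ x ∈ A, E₁.π (s₁ x) = x) (hs₂ : ∀ x ∈ A, E₂.π (s₂ x) = x)
    (hstab : E₁.stab A s₁ ⊆ E₂.stab A s₂) {x : X} (hx : x ∈ A) :
    inducedMap hsat s₂ (s₁ x) = s₂ x := by
  have hxx : (s₁ x, s₁ x) ∈ E₁.rel := by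
    rw [mem_rel, hs₁ x hx]
    exact ⟨hrefl x, E₁.act_id x _ (hs₁ x hx)⟩
  rw [inducedMap_eq hsat hsymm htrans hs₁ hs₂ hstab hx hxx, hs₁ x hx, E₂.act_id x _ (hs₂ x hx)]

theorem inducedMap_act (hsymm : ∀ ⦃x y⦄, (x, y) ∈ R → (y, x) ∈ R)
    (htrans : ∀ ⦃x y z⦄, (x, y) ∈ R → (y, z) ∈ R → (x, z) ∈ R)
    (hs₁ : ∀ x ∈ A, E₁.π (s₁ x) = x) (hs₂ : ∀ x ∈ A, E₂.π (s₂ x) = x)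
    (hstab : E₁.stab A s₁ ⊆ E₂.stab A s₂) {x y : X} (t : E₁.F) (hxy : (x, y) ∈ R)
    (ht : E₁.π t = y) :
    inducedMap hsat s₂ (E₁.act x y t) = E₂.act x y (inducedMap hsat s₂ t) := by
  obtain ⟨c, hc, hct⟩ := hsat t
  have hyc : (y, c) ∈ R := ht ▸ hs₁ c hc ▸ hct.1
  have hct' : (s₁ c, E₁.act x y t) ∈ E₁.rel :=
    E₁.rel_trans htrans hct (ht ▸ E₁.mem_rel_act (ht ▸ hxy))
  rw [inducedMap_eq hsat hsymm htrans hs₁ hs₂ hstab hc hct',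
    inducedMap_eq hsat hsymm htrans hs₁ hs₂ hstab hc hct, E₁.act_proj t hxy ht, ht,
    E₂.act_comp _ hxy hyc (hs₂ c hc)]

theorem measurable_inducedMap [StandardBorelSpace X] (hRm : MeasurableSet R)
    (hsymm : ∀ ⦃x y⦄, (x, y) ∈ R → (y, x) ∈ R)
    (htrans : ∀ ⦃x y z⦄, (x, y) ∈ R → (y, z) ∈ R → (x, z) ∈ R)
    (h₁ : E₁.IsPartialSection A s₁) (h₂ : E₂.IsPartialSection A s₂)
    (hstab : E₁.stab A s₁ ⊆ E₂.stab A s₂) : Measurable (inducedMap hsat s₂) := by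
  let S := {q : X × X // q ∈ R ∧ q.2 ∈ A}
  have : StandardBorelSpace S := (hRm.inter (measurable_snd h₁.1)).standardBorel
  let p : S → E₁.F := fun q => E₁.act q.1.1 q.1.2 (s₁ q.1.2)
  have hp_surj : Function.Surjective p := by
    intro t
    obtain ⟨x, hx, hR, hact⟩ := hsat t
    rw [h₁.2.2 x hx] at hR hact
    exact ⟨⟨(E₁.π t, x), hR, hx⟩, hact⟩
  have hfactor : inducedMap hsat s₂ ∘ p = fun q => E₂.act q.1.1 q.1.2 (s₂ q.1.2) := by
    funext ⟨⟨y, x⟩, hR, hx⟩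
    have hxt : (s₁ x, p ⟨(y, x), hR, hx⟩) ∈ E₁.rel := by
      have h := E₁.mem_rel_act (t := s₁ x) ((h₁.2.2 x hx).symm ▸ hR)
      rwa [h₁.2.2 x hx] at h
    rw [Function.comp_apply, inducedMap_eq hsat hsymm htrans h₁.2.2 h₂.2.2 hstab hx hxt,
      E₁.act_proj _ hR (h₁.2.2 x hx)]
  exact ((E₁.measurable_act_section h₁).measurable_comp_iff_of_surjective hp_surj).1
    (hfactor ▸ E₂.measurable_act_section h₂)

theorem isMorphism_inducedMap [StandardBorelSpace X] (hRm : MeasurableSet R)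
    (hsymm : ∀ ⦃x y⦄, (x, y) ∈ R → (y, x) ∈ R)
    (htrans : ∀ ⦃x y z⦄, (x, y) ∈ R → (y, z) ∈ R → (x, z) ∈ R)
    (h₁ : E₁.IsPartialSection A s₁) (h₂ : E₂.IsPartialSection A s₂)
    (hstab : E₁.stab A s₁ ⊆ E₂.stab A s₂) : IsMorphism E₁ E₂ (inducedMap hsat s₂) :=
  ⟨measurable_inducedMap hsat hRm hsymm htrans h₁ h₂ hstab,
    π_inducedMap hsat h₁.2.2 h₂.2.2,
    fun _ _ t hxy ht => inducedMap_act hsat hsymm htrans h₁.2.2 h₂.2.2 hstab t hxy ht⟩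

end InducedMap

end RFibSp

theorem exists_morphism_iff_stab_le_general
    {X : Type u} [MeasurableSpace X] [StandardBorelSpace X]
    {R : Set (X × X)} (hR : IsCBER R)
    (E1 E2 : RFibSp X R) (A : Set X)
    (s1 : X → E1.F) (s2 : X → E2.F)
    (h1 : E1.IsPartialSection A s1) (h2 : E2.IsPartialSection A s2)
    (hsat1 : E1.IsSaturating A s1) :
    ((∃ f : E1.F → E2.F, RFibSp.IsMorphism E1 E2 f ∧ ∀ x ∈ A, f (s1 x) = s2 x) ↔
      E1.stab A s1 ⊆ E2.stab A s2) ∧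
    (E2.IsSaturating A s2 →
      ∀ f : E1.F → E2.F, RFibSp.IsMorphism E1 E2 f → (∀ x ∈ A, f (s1 x) = s2 x) →
        Function.Surjective f) := by
  obtain ⟨hRm, hrefl, hsymm, htrans, -⟩ := hR
  refine ⟨⟨fun ⟨f, hf, hfs⟩ => hf.stab_subset h1.2.2 hfs, fun hstab => ?_⟩,
    fun hsat2 f hf hfs => hf.surjective_of_isSaturating h1.2.2 h2.2.2 hfs hsat2⟩
  exact ⟨RFibSp.inducedMap hsat1 s2,
    RFibSp.isMorphism_inducedMap hsat1 hRm hsymm htrans h1 h2 hstab,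
    fun x hx => RFibSp.inducedMap_section hsat1 hrefl hsymm htrans h1.2.2 h2.2.2 hstab hx⟩

/-- Given partial sections `s₁`, `s₂` of `R`-fibered spaces `E₁`, `E₂` on a complete domain `A`
of `R`, with `s₁` saturating, a morphism sending `s₁` to `s₂` exists iff `Stab(s₁) ⊆ Stab(s₂)`;
if `s₂` is also saturating, any such morphism is surjective. -/
theorem exists_morphism_iff_stab_le
    {X : Type u} [MeasurableSpace X] [StandardBorelSpace X]
    {R : Set (X × X)} (hR : IsCBER R)
    (E1 E2 : RFibSp X R) (A : Set X) (hA : IsCompleteDomain R A)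
    (s1 : X → E1.F) (s2 : X → E2.F)
    (h1 : E1.IsPartialSection A s1) (h2 : E2.IsPartialSection A s2)
    (hsat1 : E1.IsSaturating A s1) :
    ((∃ f : E1.F → E2.F, RFibSp.IsMorphism E1 E2 f ∧ ∀ x ∈ A, f (s1 x) = s2 x) ↔
      E1.stab A s1 ⊆ E2.stab A s2) ∧
    (E2.IsSaturating A s2 →
      ∀ f : E1.F → E2.F, RFibSp.IsMorphism E1 E2 f → (∀ x ∈ A, f (s1 x) = s2 x) →
        Function.Surjective f) :=
  exists_morphism_iff_stab_le_general hR E1 E2 A s1 s2 h1 h2 hsat1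
end

section
/- Let S be a countable Borel equivalence relation on a standard Borel space Y acting on an S-arboretum B over Y. Suppose there is a saturating Borel section d : Y → B⁰ of the vertex space, with stabilizer S' = Stab_S(d). Let (s_a)_{a∈A} be a countable family of partial sections s_a : A_a → B¹ of the edge space (the extra-edges) such that: (1) o(s_a(x)) ∈ d(Y) for every a and every x ∈ A_a; (2) for each a there is an element φ_a : A_a → B_a of the full pseudogroup [[S]] with (φ_a(x), x)·t(s_a(x)) = d(φ_a(x)) for every x ∈ A_a; (3) the union of the images s_a(A_a) is a complete domain of the induced equivalence relation S_{B¹} on B¹. Then S is the smallest equivalence relation containing S' and the equivalence relation S'' generated by the graphs of the φ_a. -/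
/-!
Every vertex of the fiber `B_u` is a translate `(u, z)·d(z)` of the section (call `z` a label of
it), and any two labels of one vertex are `S'`-related. By (3), every edge of `B_u` is a
translate of an extra-edge `s_a(w)`; by (1) and (2) its endpoints are labelled by `w` and
`φ_a(w)`. Walking in the tree `B_u` from `d(u)` to `(u, v)·d(v)` therefore links `u` to `v` by a
chain of `S'`-steps and `φ_a`-steps.
-/

open Set

universe u

namespace RFibSp

variable {X : Type u} [MeasurableSpace X] {R : Set (X × X)} (E : RFibSp X R)

theorem mem_rel_iff {t t' : E.F} {x y : X} (ht : E.π t = y) (ht' : E.π t' = x) :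
    (t, t') ∈ E.rel ↔ (x, y) ∈ R ∧ E.act x y t = t' := by
  subst ht ht'
  rfl

theorem act_act_symm {x y : X} (t : E.F) (hxy : (x, y) ∈ R) (hyx : (y, x) ∈ R)
    (ht : E.π t = y) : E.act y x (E.act x y t) = t := by
  rw [E.act_comp t hyx hxy ht, E.act_id y t ht]

theorem mem_stab_univ_of_act_eq (hR : Equivalence fun x y => (x, y) ∈ R) {d : X → E.F}
    (hdπ : ∀ x, E.π (d x) = x) {u p q : X} (hp : (u, p) ∈ R) (hq : (u, q) ∈ R)
    (h : E.act u p (d p) = E.act u q (d q)) : (p, q) ∈ E.stab univ d := by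
  refine ⟨mem_univ p, mem_univ q, hR.trans (hR.symm hq) hp, ?_⟩
  rw [← E.act_comp (d p) (hR.symm hq) hp (hdπ p), h,
    E.act_act_symm (d q) hq (hR.symm hq) (hdπ q)]

end RFibSp

namespace RGraphField

variable {X : Type u} [MeasurableSpace X] {R : Set (X × X)} (G : RGraphField X R)

theorem exists_extra_edge_endpoints (hR : Equivalence fun x y => (x, y) ∈ R)
    {d : X → G.V.F} (hdπ : ∀ x, G.V.π (d x) = x)
    {ι : Type*} {Aa : ι → Set X} {sa : ι → X → G.Edg.F}
    (hsaπ : ∀ a, ∀ x ∈ Aa a, G.Edg.π (sa a x) = x)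
    {φ : ι → X → X} (hφ : ∀ a, ∀ x ∈ Aa a, (x, φ a x) ∈ R)
    (h1 : ∀ a, ∀ x ∈ Aa a, ∃ y : X, G.o (sa a x) = d y)
    (h2 : ∀ a, ∀ x ∈ Aa a, G.V.act (φ a x) x (G.t (sa a x)) = d (φ a x))
    (h3 : ∀ e : G.Edg.F, ∃ a, ∃ x ∈ Aa a, (sa a x, e) ∈ G.Edg.rel)
    {u : X} (e : G.Edg.F) (he : G.Edg.π e = u) :
    ∃ a, ∃ w ∈ Aa a, (u, w) ∈ R ∧ (u, φ a w) ∈ R ∧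
      G.o e = G.V.act u w (d w) ∧ G.t e = G.V.act u (φ a w) (d (φ a w)) := by
  obtain ⟨a, w, hw, hwe⟩ := h3 e
  have hsw := hsaπ a w hw
  obtain ⟨huw, rfl⟩ := (G.Edg.mem_rel_iff hsw he).1 hwe
  have hwφ := hφ a w hw
  refine ⟨a, w, hw, huw, hR.trans huw hwφ, ?_, ?_⟩
  · obtain ⟨y, hy⟩ := h1 a w hw
    have hyw : y = w := by rw [← hdπ y, ← hy, G.o_mor.2.1, hsw]
    rw [G.o_mor.2.2 _ huw hsw, hy, hyw]
  · rw [G.t_mor.2.2 _ huw hsw, ← h2 a w hw,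
      G.V.act_comp _ (hR.trans huw hwφ) (hR.symm hwφ) (by rw [G.t_mor.2.1, hsw])]

theorem eqvGen_of_reachable (hR : Equivalence fun x y => (x, y) ∈ R)
    {d : X → G.V.F} (hdπ : ∀ x, G.V.π (d x) = x) (hdsat : G.V.IsSaturating univ d)
    {ι : Type*} {Aa : ι → Set X} {sa : ι → X → G.Edg.F}
    (hsaπ : ∀ a, ∀ x ∈ Aa a, G.Edg.π (sa a x) = x)
    {φ : ι → X → X} (hφ : ∀ a, ∀ x ∈ Aa a, (x, φ a x) ∈ R)
    (h1 : ∀ a, ∀ x ∈ Aa a, ∃ y : X, G.o (sa a x) = d y)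
    (h2 : ∀ a, ∀ x ∈ Aa a, G.V.act (φ a x) x (G.t (sa a x)) = d (φ a x))
    (h3 : ∀ e : G.Edg.F, ∃ a, ∃ x ∈ Aa a, (sa a x, e) ∈ G.Edg.rel)
    {u : X} {c : G.V.F} (hc : Relation.ReflTransGen (G.Adj u) (d u) c)
    {z : X} (hz : (u, z) ∈ R) (hzc : G.V.act u z (d z) = c) :
    Relation.EqvGen (fun p q => (p, q) ∈ G.V.stab univ d ∨ ∃ a, p ∈ Aa a ∧ φ a p = q) u z := by
  induction hc generalizing z with
  | refl =>
    have hzu : (z, u) ∈ G.V.stab univ d :=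
      G.V.mem_stab_univ_of_act_eq hR hdπ hz (hR.refl u) (by rw [hzc, G.V.act_id u _ (hdπ u)])
    exact .symm _ _ (.rel _ _ (.inl hzu))
  | tail _ hbc ih =>
    obtain ⟨e, he, rfl, rfl⟩ := hbc
    obtain ⟨a, w, hw, huw, huφ, ho, ht⟩ :=
      G.exists_extra_edge_endpoints hR hdπ hsaπ hφ h1 h2 h3 e he
    obtain ⟨x, -, hxe⟩ := hdsat (G.o e)
    obtain ⟨hux, hx⟩ := (G.V.mem_rel_iff (hdπ x) (by rw [G.o_mor.2.1, he])).1 hxe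
    have hxw := G.V.mem_stab_univ_of_act_eq hR hdπ hux huw (hx.trans ho)
    have hφz := G.V.mem_stab_univ_of_act_eq hR hdπ huφ hz (ht.symm.trans hzc.symm)
    exact (ih hux hx).trans _ _ _ <| (Relation.EqvGen.rel _ _ (.inl hxw)).trans _ _ _ <|
      (Relation.EqvGen.rel _ _ (.inr ⟨a, hw, rfl⟩)).trans _ _ _ (.rel _ _ (.inl hφz))

end RGraphField

theorem generated_by_vertex_stabilizer_and_extra_edges_general
    {Y : Type u} [MeasurableSpace Y]
    {S : Set (Y × Y)} (hS : IsCBER S)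
    (G : RGraphField Y S) (hArb : G.IsArboretum)
    (d : Y → G.V.F) (hd : G.V.IsPartialSection Set.univ d)
    (hdsat : G.V.IsSaturating Set.univ d)
    {ι : Type*}
    (Aa : ι → Set Y) (sa : ι → Y → G.Edg.F)
    (hsa : ∀ a, G.Edg.IsPartialSection (Aa a) (sa a))
    (φ : ι → Y → Y) (hφ : ∀ a, MemPseudoGroup S (Aa a) (φ a))
    -- (1) origins of the extra-edges lie on the section `d` :
    (h1 : ∀ a, ∀ x ∈ Aa a, ∃ y : Y, G.o (sa a x) = d y)
    -- (2) `φ_a` carries the terminal vertices of the extra-edges back to `d` :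
    (h2 : ∀ a, ∀ x ∈ Aa a, G.V.act (φ a x) x (G.t (sa a x)) = d (φ a x))
    -- (3) the union of the images of the extra-edges is a complete domain of `S_{B¹}` :
    (h3 : ∀ e : G.Edg.F, ∃ a, ∃ x ∈ Aa a, (sa a x, e) ∈ G.Edg.rel) :
    ∀ u v : Y, (u, v) ∈ S ↔
      Relation.EqvGen (fun p q =>
        (p, q) ∈ G.V.stab Set.univ d ∨ ∃ a, p ∈ Aa a ∧ φ a p = q) u v := by
  have hR := hS.equivalence
  have hdπ : ∀ x, G.V.π (d x) = x := fun x => hd.2.2 x (mem_univ x)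
  have hsaπ : ∀ a, ∀ x ∈ Aa a, G.Edg.π (sa a x) = x := fun a => (hsa a).2.2
  have hφR : ∀ a, ∀ x ∈ Aa a, (x, φ a x) ∈ S := fun a => (hφ a).2.2.2
  intro u v
  constructor
  · intro huv
    have hconn := (hArb u).1 (d u) _ (hdπ u) (G.V.act_proj (d v) huv (hdπ v))
    exact G.eqvGen_of_reachable hR hdπ hdsat hsaπ hφR h1 h2 h3 hconn huv rfl
  · refine fun h => hR.eqvGen_iff.1 (Relation.EqvGen.mono ?_ u v h)
    rintro p q (hpq | ⟨a, hp, rfl⟩)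
    · exact hR.symm hpq.2.2.1
    · exact hφR a p hp

/-- If an `S`-arboretum has a saturating vertex section `d` with stabilizer `S'`, and a
countable family of extra-edge partial sections whose origins lie on `d`, whose terminal
vertices are carried back to `d` by partial isomorphisms `φ_a` of `[[S]]`, and whose images
together form a complete domain of the induced relation on the edge space, then `S` is the
smallest equivalence relation containing `S'` and the relation generated by the `φ_a`. -/
theorem generated_by_vertex_stabilizer_and_extra_edges
    {Y : Type u} [MeasurableSpace Y] [StandardBorelSpace Y]
    {S : Set (Y × Y)} (hS : IsCBER S)
    (G : RGraphField Y S) (hArb : G.IsArboretum)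
    (d : Y → G.V.F) (hd : G.V.IsPartialSection Set.univ d)
    (hdsat : G.V.IsSaturating Set.univ d)
    {ι : Type*} [Countable ι]
    (Aa : ι → Set Y) (sa : ι → Y → G.Edg.F)
    (hsa : ∀ a, G.Edg.IsPartialSection (Aa a) (sa a))
    (φ : ι → Y → Y) (hφ : ∀ a, MemPseudoGroup S (Aa a) (φ a))
    -- (1) origins of the extra-edges lie on the section `d` :
    (h1 : ∀ a, ∀ x ∈ Aa a, ∃ y : Y, G.o (sa a x) = d y)
    -- (2) `φ_a` carries the terminal vertices of the extra-edges back to `d` :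
    (h2 : ∀ a, ∀ x ∈ Aa a, G.V.act (φ a x) x (G.t (sa a x)) = d (φ a x))
    -- (3) the union of the images of the extra-edges is a complete domain of `S_{B¹}` :
    (h3 : ∀ e : G.Edg.F, ∃ a, ∃ x ∈ Aa a, (sa a x, e) ∈ G.Edg.rel) :
    ∀ u v : Y, (u, v) ∈ S ↔
      Relation.EqvGen (fun p q =>
        (p, q) ∈ G.V.stab Set.univ d ∨ ∃ a, p ∈ Aa a ∧ φ a p = q) u v :=
  generated_by_vertex_stabilizer_and_extra_edges_general hS G hArb d hd hdsat Aa sa hsa φ hφ h1 h2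
    h3
end
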